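/- Let r ≥ 4 be an integer. For every ε > 0 there exists n_0 such that for all n ≥ n_0, every K_{r+1}-free graph G on n vertices satisfies ν(K_4, G) ≤ ((r^3 − 6r^2 + 11r − 6)/r^3)·C(n,4) + ε·n^4. -/

import Mathlib

open SimpleGraph

/-- The number of (not necessarily induced) subgraphs of `G` isomorphic to `T`. -/
noncomputable def subgraphCount {α β : Type*} (T : SimpleGraph α) (G : SimpleGraph β) : ℕ :=
  Nat.card {H : G.Subgraph // Nonempty (T ≃g H.coe)}

/-- `G` is `F`-free: it contains no subgraph isomorphic to `F`. -/
def IsFFree {α β : Type*} (F : SimpleGraph α) (G : SimpleGraph β) : Prop :=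
  ∀ H : G.Subgraph, IsEmpty (F ≃g H.coe)

/-- The generalized Turán number `ex(n, T, F)`. -/
noncomputable def genTuran (n : ℕ) {α γ : Type*} (T : SimpleGraph α) (F : SimpleGraph γ) : ℕ :=
  sSup {k | ∃ G : SimpleGraph (Fin n), IsFFree F G ∧ subgraphCount T G = k}

/-- The path with three edges on four vertices. -/
noncomputable def P3 : SimpleGraph (Fin 4) := pathGraph 4

/-!
Weighted Zykov symmetrization. Give the vertices weights `w ≥ 0` and count `k`-cliques with
weight `∏ w`. Two non-adjacent vertices lie in no common clique, so this count is affine in their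
pair of weights at fixed sum; moving all the weight of one onto the other (the one whose link is
heavier) does not decrease it and shrinks the support. When the support is a clique, of size at
most `r` since `G` is `K_{r+1}`-free, the count is the elementary symmetric polynomial `e_k(w)`,
and Maclaurin's inequality gives `e_k(w) ≤ C(r, k) (∑ w / r)^k`. With `w = 1` this is
`ν(K_4, G) ≤ C(r, 4) (n / r)^4 = (r-1)(r-2)(r-3)/r³ · n⁴/24`, and `24 C(n, 4) ≥ n⁴ - 6n³`.
-/

open Finset

namespace Finset

variable {ι : Type*}

/-- `Multiset.esymm (S.val.map x) m`, written as a sum over `m`-subsets. -/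
noncomputable def esymmOn (S : Finset ι) (x : ι → ℝ) (m : ℕ) : ℝ :=
  ∑ T ∈ S.powersetCard m, ∏ j ∈ T, x j

variable {S : Finset ι} {x : ι → ℝ}

lemma esymmOn_nonneg (hx : ∀ j ∈ S, 0 ≤ x j) (m : ℕ) : 0 ≤ S.esymmOn x m :=
  sum_nonneg fun _ hT ↦ prod_nonneg fun j hj ↦ hx j ((mem_powersetCard.1 hT).1 hj)

@[simp] lemma esymmOn_zero (S : Finset ι) (x : ι → ℝ) : S.esymmOn x 0 = 1 := by
  simp [esymmOn]

lemma esymmOn_eq_zero_of_card_lt {m : ℕ} (h : #S < m) : S.esymmOn x m = 0 := by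
  simp [esymmOn, powersetCard_eq_empty.2 h]

variable [DecidableEq ι]

lemma sum_powersetCard_succ_filter_mem {i : ι} (hi : i ∈ S) (m : ℕ) :
    ∑ T ∈ S.powersetCard (m + 1) with i ∈ T, ∏ j ∈ T, x j = x i * (S.erase i).esymmOn x m := by
  rw [esymmOn, mul_sum]
  refine sum_nbij' (·.erase i) (insert i) ?_ ?_ ?_ ?_ ?_
  · intro T hT
    simp only [mem_filter, mem_powersetCard] at hT
    simp only [mem_powersetCard, card_erase_of_mem hT.2,
      hT.1.2, add_tsub_cancel_right, and_true]
    exact erase_subset_erase i hT.1.1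
  · intro T hT
    simp only [mem_powersetCard, subset_erase] at hT
    simp [insert_subset_iff, hi, hT.1.1, card_insert_of_notMem hT.1.2, hT.2]
  · intro T hT
    exact insert_erase (mem_filter.1 hT).2
  · intro T hT
    exact erase_insert (subset_erase.1 (mem_powersetCard.1 hT).1).2
  · intro T hT
    exact (mul_prod_erase T x (mem_filter.1 hT).2).symm

lemma esymmOn_succ_eq_add {i : ι} (hi : i ∈ S) (m : ℕ) :
    S.esymmOn x (m + 1) = (S.erase i).esymmOn x (m + 1) + x i * (S.erase i).esymmOn x m := by
  rw [← sum_powersetCard_succ_filter_mem hi, esymmOn, esymmOn,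
    ← sum_filter_not_add_sum_filter (S.powersetCard (m + 1)) (i ∈ ·)]
  congr 1
  refine sum_congr ?_ fun _ _ ↦ rfl
  ext T
  simp only [mem_filter, mem_powersetCard, subset_erase]
  tauto

lemma succ_mul_esymmOn_succ (m : ℕ) :
    ((m : ℝ) + 1) * S.esymmOn x (m + 1) = ∑ i ∈ S, x i * (S.erase i).esymmOn x m := by
  have hcount : ∀ T ∈ S.powersetCard (m + 1),
      ((m : ℝ) + 1) * ∏ j ∈ T, x j = ∑ i ∈ S, if i ∈ T then ∏ j ∈ T, x j else 0 := by
    intro T hT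
    rw [mem_powersetCard] at hT
    rw [sum_ite_mem, inter_eq_right.2 hT.1, sum_const, hT.2, nsmul_eq_mul]
    push_cast
    ring
  rw [esymmOn, mul_sum, sum_congr rfl hcount, sum_comm]
  exact sum_congr rfl fun i hi ↦ by rw [← sum_filter, sum_powersetCard_succ_filter_mem hi]

lemma esymmOn_one : S.esymmOn x 1 = ∑ i ∈ S, x i := by
  simpa using succ_mul_esymmOn_succ (S := S) (x := x) 0

lemma monovaryOn_mul_esymmOn_erase (hx : ∀ j ∈ S, 0 ≤ x j) (m : ℕ) :
    MonovaryOn x (fun i ↦ x i * (S.erase i).esymmOn x m) S := by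
  intro i hi j hj hlt
  by_contra! hji
  refine hlt.not_ge ?_
  rcases m with _ | m
  · simpa using hji.le
  have hij : i ≠ j := by rintro rfl; exact hji.false
  simp only [mem_coe] at hi hj
  dsimp only
  rw [esymmOn_succ_eq_add (mem_erase.2 ⟨hij.symm, hj⟩),
    esymmOn_succ_eq_add (mem_erase.2 ⟨hij, hi⟩), erase_right_comm]
  have hE : 0 ≤ ((S.erase i).erase j).esymmOn x (m + 1) :=
    esymmOn_nonneg (fun y hy ↦ hx y (mem_of_mem_erase (mem_of_mem_erase hy))) _
  nlinarith

/-- Chebyshev's sum inequality for the similarly ordered `x` and `i ↦ x i * e_m(S \ {i})`. -/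
lemma card_mul_esymmOn_succ_le (hx : ∀ j ∈ S, 0 ≤ x j) (m : ℕ) :
    #S * ((m + 1) * S.esymmOn x (m + 1)) ≤ (#S - m) * (∑ i ∈ S, x i) * S.esymmOn x m := by
  rcases m with _ | m
  · simp [esymmOn_one]
  set sx := ∑ i ∈ S, x i
  have hsplit : ((m + 1 : ℕ) + 1 : ℝ) * S.esymmOn x (m + 1 + 1) =
      sx * S.esymmOn x (m + 1) - ∑ i ∈ S, x i * (x i * (S.erase i).esymmOn x m) := by
    rw [succ_mul_esymmOn_succ, sum_mul, ← sum_sub_distrib]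
    refine sum_congr rfl fun i hi ↦ ?_
    rw [esymmOn_succ_eq_add hi]
    ring
  have hcheb := (monovaryOn_mul_esymmOn_erase hx m).sum_mul_sum_le_card_mul_sum
  rw [← succ_mul_esymmOn_succ] at hcheb
  rw [hsplit]
  push_cast at hcheb ⊢
  nlinarith

lemma mul_esymmOn_succ_le {r : ℝ} (hS : #S ≤ r) (hx : ∀ j ∈ S, 0 ≤ x j) (m : ℕ) :
    r * ((m + 1) * S.esymmOn x (m + 1)) ≤ (r - m) * (∑ i ∈ S, x i) * S.esymmOn x m := by
  have hstep := card_mul_esymmOn_succ_le hx m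
  have hsE : 0 ≤ (∑ i ∈ S, x i) * S.esymmOn x m :=
    mul_nonneg (sum_nonneg hx) (esymmOn_nonneg hx m)
  rcases S.eq_empty_or_nonempty with rfl | hne
  · simp [esymmOn_eq_zero_of_card_lt (show #(∅ : Finset ι) < m + 1 by simp)]
  have hk : (0 : ℝ) < #S := by exact_mod_cast hne.card_pos
  refine le_of_mul_le_mul_left ?_ hk
  have hmS : (#S : ℝ) * m * _ ≤ r * m * _ :=
    mul_le_mul_of_nonneg_right (mul_le_mul_of_nonneg_right hS m.cast_nonneg) hsE
  nlinarith [mul_le_mul_of_nonneg_left hstep (hk.le.trans hS)]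

/-- Maclaurin's inequality. -/
theorem esymmOn_le_choose_mul_pow {r : ℕ} (hS : #S ≤ r) (hx : ∀ j ∈ S, 0 ≤ x j) (m : ℕ) :
    S.esymmOn x m ≤ r.choose m * ((∑ i ∈ S, x i) / r) ^ m := by
  induction m with
  | zero => simp
  | succ m ih =>
    rcases lt_or_ge #S (m + 1) with hlt | hle
    · rw [esymmOn_eq_zero_of_card_lt hlt]
      have := sum_nonneg hx
      positivity
    have hr : (0 : ℝ) < r := by exact_mod_cast (show 0 < r by omega)
    have hchoose : (r.choose (m + 1) : ℝ) * (m + 1) = r.choose m * (r - m) := by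
      have h := congrArg (Nat.cast : ℕ → ℝ) (r.choose_succ_right_eq m)
      push_cast [Nat.cast_sub (by omega : m ≤ r)] at h
      exact h
    have hrm : (0 : ℝ) ≤ r - m := by
      rw [sub_nonneg]; exact_mod_cast (show m ≤ r by omega)
    set t := (∑ i ∈ S, x i) / r
    have hsum : ∑ i ∈ S, x i = r * t := (mul_div_cancel₀ _ hr.ne').symm
    refine le_of_mul_le_mul_left ?_ (by positivity : (0 : ℝ) < r * (m + 1))
    calc r * (m + 1) * S.esymmOn x (m + 1)
        ≤ (r - m) * (∑ i ∈ S, x i) * S.esymmOn x m := by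
          rw [mul_assoc]; exact mul_esymmOn_succ_le (by exact_mod_cast hS) hx m
      _ ≤ (r - m) * (∑ i ∈ S, x i) * (r.choose m * t ^ m) :=
          mul_le_mul_of_nonneg_left ih (mul_nonneg hrm (sum_nonneg hx))
      _ = r * (m + 1) * (r.choose (m + 1) * t ^ (m + 1)) := by
          rw [hsum]
          linear_combination (-(r * t ^ (m + 1))) * hchoose

end Finset

namespace SimpleGraph

lemma IsClique.card_le_of_cliqueFree {V : Type*} {G : SimpleGraph V} {r : ℕ} {T : Finset V}
    (hT : G.IsClique (T : Set V)) (hG : G.CliqueFree (r + 1)) : #T ≤ r := by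
  by_contra! hr
  obtain ⟨t, htT, ht⟩ := exists_subset_card_eq (Nat.succ_le_of_lt hr)
  exact hG t ⟨hT.subset (coe_subset.2 htT), ht⟩

variable {V : Type*} [Fintype V] [DecidableEq V] (G : SimpleGraph V) [DecidableRel G.Adj]

noncomputable def cliqueWeight (k : ℕ) (w : V → ℝ) : ℝ :=
  ∑ s ∈ G.cliqueFinset k, ∏ y ∈ s, w y

noncomputable def linkWeight (k : ℕ) (w : V → ℝ) (u : V) : ℝ :=
  ∑ s ∈ G.cliqueFinset k with u ∈ s, ∏ y ∈ s.erase u, w y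

variable {G}

lemma notMem_of_not_adj_of_mem_cliqueFinset {k : ℕ} {u v : V} {s : Finset V}
    (hs : s ∈ G.cliqueFinset k) (huv : u ≠ v) (hadj : ¬G.Adj u v) (hu : u ∈ s) : v ∉ s :=
  fun hv ↦ hadj ((mem_cliqueFinset_iff.1 hs).isClique hu hv huv)

lemma cliqueWeight_update_update {k : ℕ} (w : V → ℝ) {u v : V} (huv : u ≠ v) (hadj : ¬G.Adj u v)
    (a b : ℝ) :
    G.cliqueWeight k (Function.update (Function.update w u a) v b) =
      a * G.linkWeight k w u + b * G.linkWeight k w v +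
        ∑ s ∈ G.cliqueFinset k with u ∉ s ∧ v ∉ s, ∏ y ∈ s, w y := by
  set w' := Function.update (Function.update w u a) v b
  have hw' : ∀ t : Finset V, u ∉ t → v ∉ t → ∏ y ∈ t, w' y = ∏ y ∈ t, w y := fun t hu hv ↦ by
    rw [prod_update_of_notMem hv, prod_update_of_notMem hu]
  have hsplit : ∀ f : Finset V → ℝ, ∑ s ∈ G.cliqueFinset k, f s =
      ∑ s ∈ G.cliqueFinset k with u ∈ s, f s + ∑ s ∈ G.cliqueFinset k with v ∈ s, f s +
        ∑ s ∈ G.cliqueFinset k with u ∉ s ∧ v ∉ s, f s := fun f ↦ by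
    rw [← sum_filter_add_sum_filter_not _ (u ∈ ·),
      ← sum_filter_add_sum_filter_not {s ∈ G.cliqueFinset k | u ∉ s} (v ∈ ·), filter_filter,
      filter_filter, add_assoc]
    congr 2
    refine sum_congr ?_ fun _ _ ↦ rfl
    ext s
    simp only [mem_filter, and_congr_right_iff, and_iff_right_iff_imp]
    exact fun hs hv hu ↦ notMem_of_not_adj_of_mem_cliqueFinset hs huv hadj hu hv
  have hu_part : ∑ s ∈ G.cliqueFinset k with u ∈ s, ∏ y ∈ s, w' y = a * G.linkWeight k w u := by
    rw [linkWeight, mul_sum]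
    refine sum_congr rfl fun s hs ↦ ?_
    obtain ⟨hs, hu⟩ := mem_filter.1 hs
    have hv := notMem_of_not_adj_of_mem_cliqueFinset hs huv hadj hu
    rw [← mul_prod_erase s w' hu, hw' _ (notMem_erase u s) (fun h ↦ hv (mem_of_mem_erase h))]
    simp [w', huv]
  have hv_part : ∑ s ∈ G.cliqueFinset k with v ∈ s, ∏ y ∈ s, w' y = b * G.linkWeight k w v := by
    rw [linkWeight, mul_sum]
    refine sum_congr rfl fun s hs ↦ ?_
    obtain ⟨hs, hv⟩ := mem_filter.1 hs
    have hu := notMem_of_not_adj_of_mem_cliqueFinset hs huv.symm (fun h ↦ hadj h.symm) hv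
    rw [← mul_prod_erase s w' hv, hw' _ (fun h ↦ hu (mem_of_mem_erase h)) (notMem_erase v s)]
    simp [w']
  rw [cliqueWeight, hsplit, hu_part, hv_part]
  exact congrArg _ (sum_congr rfl fun s hs ↦ hw' s (mem_filter.1 hs).2.1 (mem_filter.1 hs).2.2)

lemma sum_update_update (w : V → ℝ) {u v : V} (huv : u ≠ v) (a b : ℝ) :
    ∑ x, Function.update (Function.update w u a) v b x = ∑ x, w x - w u - w v + a + b := by
  have hu : u ∈ univ \ {v} := by simp [huv]
  rw [sum_update_of_mem (mem_univ v), sum_update_of_mem hu,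
    sum_eq_sum_sdiff_singleton_add (mem_univ v) w, sum_eq_sum_sdiff_singleton_add hu w]
  ring

/-- Zykov symmetrization: move all the weight of the vertex with the lighter link onto the other. -/
lemma exists_cliqueWeight_le_of_not_adj (k : ℕ) {w : V → ℝ} (hw : ∀ x, 0 ≤ w x) {u v : V}
    (huv : u ≠ v) (hadj : ¬G.Adj u v) (hu : w u ≠ 0) (hv : w v ≠ 0) :
    ∃ w' : V → ℝ, (∀ x, 0 ≤ w' x) ∧ ∑ x, w' x = ∑ x, w x ∧
      #{x | w' x ≠ 0} < #{x | w x ≠ 0} ∧ G.cliqueWeight k w ≤ G.cliqueWeight k w' := by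
  wlog hL : G.linkWeight k w u ≤ G.linkWeight k w v generalizing u v
  · exact this huv.symm (fun h ↦ hadj h.symm) hv hu (le_of_not_ge hL)
  refine ⟨Function.update (Function.update w u 0) v (w u + w v), fun x ↦ ?_, ?_, ?_, ?_⟩
  · simp only [Function.update_apply]
    split_ifs
    exacts [add_nonneg (hw u) (hw v), le_rfl, hw x]
  · rw [sum_update_update w huv]
    ring
  · refine card_lt_card ((ssubset_iff_of_subset fun x ↦ ?_).2 ⟨u, by simp [hu, huv]⟩)
    simp only [mem_filter, mem_univ, true_and, Function.update_apply]
    split_ifs <;> simp_all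
  · have hw_eq := cliqueWeight_update_update (k := k) w huv hadj (w u) (w v)
    simp only [Function.update_eq_self] at hw_eq
    rw [hw_eq, cliqueWeight_update_update w huv hadj]
    nlinarith [mul_le_mul_of_nonneg_left hL (hw u)]

lemma cliqueWeight_eq_esymmOn {k : ℕ} {w : V → ℝ} {T : Finset V} (hT : G.IsClique (T : Set V))
    (hw : ∀ x ∉ T, w x = 0) : G.cliqueWeight k w = T.esymmOn w k := by
  have hsupp : ∀ s ∈ G.cliqueFinset k, ∏ y ∈ s, w y ≠ 0 → s ⊆ T := fun s _ hs y hy ↦ by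
    by_contra hyT
    exact hs (prod_eq_zero hy (hw y hyT))
  have hcliques : {s ∈ G.cliqueFinset k | s ⊆ T} = T.powersetCard k := by
    ext s
    simp only [mem_filter, mem_powersetCard, mem_cliqueFinset_iff, isNClique_iff]
    exact ⟨fun ⟨⟨_, hk⟩, hsT⟩ ↦ ⟨hsT, hk⟩,
      fun ⟨hsT, hk⟩ ↦ ⟨⟨hT.subset (coe_subset.2 hsT), hk⟩, hsT⟩⟩
  rw [cliqueWeight, ← sum_filter_of_ne hsupp, hcliques, esymmOn]

theorem cliqueWeight_le_choose_mul_pow {r : ℕ} (hG : G.CliqueFree (r + 1)) (k : ℕ) {w : V → ℝ}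
    (hw : ∀ x, 0 ≤ w x) : G.cliqueWeight k w ≤ r.choose k * ((∑ x, w x) / r) ^ k := by
  induction hn : #{x | w x ≠ 0} using Nat.strong_induction_on generalizing w with
  | _ n ih =>
  set T : Finset V := {x | w x ≠ 0}
  by_cases hT : G.IsClique (T : Set V)
  · have hw0 : ∀ x ∉ T, w x = 0 := by simp [T]
    rw [cliqueWeight_eq_esymmOn hT hw0, ← sum_subset (subset_univ T) fun x _ hx ↦ hw0 x hx]
    exact esymmOn_le_choose_mul_pow (hT.card_le_of_cliqueFree hG) (fun x _ ↦ hw x) k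
  obtain ⟨u, hu, v, hv, huv, hadj⟩ : ∃ u ∈ T, ∃ v ∈ T, u ≠ v ∧ ¬G.Adj u v := by
    simpa [IsClique, Set.Pairwise] using hT
  obtain ⟨w', hw', hsum, hcard, hle⟩ := exists_cliqueWeight_le_of_not_adj k hw huv hadj
    (by simpa [T] using hu) (by simpa [T] using hv)
  exact hle.trans (hsum ▸ ih _ (hn ▸ hcard) hw' rfl)

theorem card_cliqueFinset_le_choose_mul_pow {r : ℕ} (hG : G.CliqueFree (r + 1)) (k : ℕ) :
    (#(G.cliqueFinset k) : ℝ) ≤ r.choose k * (Fintype.card V / r) ^ k := by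
  simpa [cliqueWeight] using cliqueWeight_le_choose_mul_pow hG k fun _ ↦ zero_le_one (α := ℝ)

end SimpleGraph

section Counting

variable {α V : Type*} {G : SimpleGraph V}

lemma isFFree_iff_free {F : SimpleGraph α} : IsFFree F G ↔ F.Free G := by
  simp [IsFFree, Free, isContained_iff_exists_iso_subgraph]

lemma cliqueFree_of_isFFree_top {n : ℕ} (h : IsFFree (⊤ : SimpleGraph (Fin n)) G) :
    G.CliqueFree n := by
  simpa using cliqueFree_iff_top_free.2 (isFFree_iff_free.1 h)

lemma SimpleGraph.Subgraph.adj_iff_of_iso_top {H : G.Subgraph} (e : (⊤ : SimpleGraph α) ≃g H.coe)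
    {a b : V} : H.Adj a b ↔ a ∈ H.verts ∧ b ∈ H.verts ∧ a ≠ b := by
  refine ⟨fun h ↦ ⟨H.edge_vert h, H.edge_vert h.symm, h.ne⟩, fun ⟨ha, hb, hab⟩ ↦ ?_⟩
  have hne : (⟨a, ha⟩ : H.verts) ≠ ⟨b, hb⟩ := fun h ↦ hab (congrArg Subtype.val h)
  have : H.coe.Adj ⟨a, ha⟩ ⟨b, hb⟩ := e.symm.map_adj_iff.1 (by simpa using hne)
  simpa using this

lemma subgraphCount_top_le_card_cliqueFinset [Fintype V] [DecidableEq V] [DecidableRel G.Adj]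
    (k : ℕ) : subgraphCount (⊤ : SimpleGraph (Fin k)) G ≤ #(G.cliqueFinset k) := by
  rw [subgraphCount, ← Nat.card_eq_finsetCard]
  have hclique : ∀ H : {H : G.Subgraph // Nonempty ((⊤ : SimpleGraph (Fin k)) ≃g H.coe)},
      H.1.verts.toFinite.toFinset ∈ G.cliqueFinset k := by
    rintro ⟨H, ⟨e⟩⟩
    refine mem_cliqueFinset_iff.2 ⟨fun a ha b hb hab ↦ ?_, ?_⟩
    · rw [Set.Finite.coe_toFinset] at ha hb
      exact H.adj_sub ((Subgraph.adj_iff_of_iso_top e).2 ⟨ha, hb, hab⟩)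
    · rw [← Set.ncard_eq_toFinset_card, ← Nat.card_coe_set_eq, Nat.card_congr e.toEquiv.symm]
      simp
  refine Nat.card_le_card_of_injective (fun H ↦ ⟨_, hclique H⟩) ?_
  rintro ⟨H₁, ⟨e₁⟩⟩ ⟨H₂, ⟨e₂⟩⟩ h
  have hverts : H₁.verts = H₂.verts := by simpa using h
  refine Subtype.ext (Subgraph.ext hverts (funext₂ fun a b ↦ propext ?_))
  rw [Subgraph.adj_iff_of_iso_top e₁, Subgraph.adj_iff_of_iso_top e₂, hverts]

end Counting

lemma Nat.cast_choose_four_mul (n : ℕ) :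
    (n.choose 4 : ℝ) * 24 = n * (n - 1) * (n - 2) * (n - 3) := by
  rw [Nat.cast_choose_eq_descPochhammer_div]
  simp [descPochhammer_succ_right, Nat.factorial]

lemma choose_four_mul_div_pow_le (r n : ℕ) {ε : ℝ} (hεn : 1 ≤ 4 * ε * n) :
    (r.choose 4 : ℝ) * (n / r) ^ 4 ≤
      ((r ^ 3 - 6 * r ^ 2 + 11 * r - 6) / r ^ 3) * n.choose 4 + ε * n ^ 4 := by
  have hn : (1 : ℝ) ≤ n := by
    rcases n.eq_zero_or_pos with rfl | hn
    · simp at hεn; linarith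
    · exact_mod_cast hn
  have hn3 : (0 : ℝ) < n ^ 3 := by positivity
  have hεn4 : (n : ℝ) ^ 3 / 4 ≤ ε * n ^ 4 := by nlinarith
  rcases r.eq_zero_or_pos with rfl | hr
  · simp; linarith
  have hr : (0 : ℝ) < r := by exact_mod_cast hr
  have hcr := Nat.cast_choose_four_mul r
  have hlhs : (r.choose 4 : ℝ) * (n / r) ^ 4 =
      ((r ^ 3 - 6 * r ^ 2 + 11 * r - 6) / r ^ 3) / 24 * n ^ 4 := by
    field_simp
    linear_combination hcr
  have hc0 : 0 ≤ ((r : ℝ) ^ 3 - 6 * r ^ 2 + 11 * r - 6) / r ^ 3 := by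
    refine div_nonneg (le_of_mul_le_mul_left ?_ hr) (by positivity)
    nlinarith [(r.choose 4).cast_nonneg (α := ℝ)]
  have hc1 : ((r : ℝ) ^ 3 - 6 * r ^ 2 + 11 * r - 6) / r ^ 3 ≤ 1 :=
    (div_le_one (by positivity)).2 (by nlinarith [sq_nonneg ((r : ℝ) - 1)])
  have hchoose : (n : ℝ) ^ 4 ≤ 24 * n.choose 4 + 6 * n ^ 3 := by
    nlinarith [Nat.cast_choose_four_mul n]
  rw [hlhs]
  nlinarith [mul_le_mul_of_nonneg_left hchoose hc0]

theorem K4_count_upper_bound_general (r : ℕ) :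
    ∀ ε : ℝ, 0 < ε → ∃ n₀ : ℕ, ∀ n : ℕ, n₀ ≤ n →
      ∀ G : SimpleGraph (Fin n), IsFFree (⊤ : SimpleGraph (Fin (r + 1))) G →
        (subgraphCount (⊤ : SimpleGraph (Fin 4)) G : ℝ) ≤
          (((r : ℝ) ^ 3 - 6 * r ^ 2 + 11 * r - 6) / r ^ 3) * n.choose 4 + ε * n ^ 4 := by
  intro ε hε
  refine ⟨⌈(4 * ε)⁻¹⌉₊, fun n hn G hG ↦ ?_⟩
  classical
  have hεn : 1 ≤ 4 * ε * n := by
    rw [← inv_le_iff_one_le_mul₀' (by linarith)]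
    exact Nat.ceil_le.1 hn
  calc (subgraphCount (⊤ : SimpleGraph (Fin 4)) G : ℝ)
      ≤ #(G.cliqueFinset 4) := by exact_mod_cast subgraphCount_top_le_card_cliqueFinset (G := G) 4
    _ ≤ r.choose 4 * (n / r) ^ 4 := by
      simpa using card_cliqueFinset_le_choose_mul_pow (cliqueFree_of_isFFree_top hG) 4
    _ ≤ _ := choose_four_mul_div_pow_le r n hεn

theorem K4_count_upper_bound (r : ℕ) (hr : 4 ≤ r) :
    ∀ ε : ℝ, 0 < ε → ∃ n₀ : ℕ, ∀ n : ℕ, n₀ ≤ n →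
      ∀ G : SimpleGraph (Fin n), IsFFree (⊤ : SimpleGraph (Fin (r + 1))) G →
        (subgraphCount (⊤ : SimpleGraph (Fin 4)) G : ℝ) ≤
          (((r : ℝ) ^ 3 - 6 * r ^ 2 + 11 * r - 6) / r ^ 3) * n.choose 4 + ε * n ^ 4 :=
  K4_count_upper_bound_general r
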